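/- Let C ⊆ F_2^n be a code with minimum distance d(C) ≥ d. Suppose f(x) = Σ_k f_k·K_k(x) is a polynomial of degree at most n with f_0 > 0, f_k ≥ 0 for all 1 ≤ k ≤ n, and f(i) ≤ 0 for all integers i with d ≤ i ≤ n. Then |C| ≤ f(0)/f_0 (Delsarte's linear programming bound). -/
import Mathlib

open Finset

noncomputable def kraw (n k i : ℕ) : ℝ :=
  ∑ j ∈ Finset.range (k + 1), (-1 : ℝ) ^ j * (i.choose j : ℝ) * ((n - i).choose (k - j) : ℝ)

noncomputable def esign (a : ZMod 2) : ℝ := if a = 1 then -1 else 1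

lemma esign_add (a b : ZMod 2) : esign (a + b) = esign a * esign b := by
  have h : ∀ c : ZMod 2, c = 0 ∨ c = 1 := by decide
  rcases h a with ha | ha <;> rcases h b with hb | hb <;> simp [ha, hb, esign]

noncomputable def chi {n : ℕ} (v u : Fin n → ZMod 2) : ℝ := ∏ i, esign (v i * u i)

def supp {n : ℕ} (u : Fin n → ZMod 2) : Finset (Fin n) := univ.filter (fun i => u i = 1)

lemma chi_mul {n : ℕ} (v u u' : Fin n → ZMod 2) : chi v (u + u') = chi v u * chi v u' := by
  unfold chi
  rw [← Finset.prod_mul_distrib]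
  refine Finset.prod_congr rfl fun i _ => ?_
  rw [Pi.add_apply, mul_add, esign_add]

lemma chi_eq_pow {n : ℕ} (v u : Fin n → ZMod 2) :
    chi v u = (-1 : ℝ) ^ (supp v ∩ supp u).card := by
  unfold chi
  have key : ∀ i : Fin n, esign (v i * u i) =
      if i ∈ supp v ∩ supp u then (-1 : ℝ) else 1 := by
    intro i
    have h : ∀ c : ZMod 2, c = 0 ∨ c = 1 := by decide
    rcases h (v i) with hv | hv <;> rcases h (u i) with hu | hu <;>
      simp [hv, hu, esign, supp, Finset.mem_inter, Finset.mem_filter]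
  simp_rw [key]
  rw [Finset.prod_ite_mem, Finset.univ_inter, Finset.prod_const]

lemma key_count {n : ℕ} (T : Finset (Fin n)) (k j : ℕ) (hj : j ≤ k) :
    ((Finset.powersetCard k (univ : Finset (Fin n))).filter
      (fun S => (S ∩ T).card = j)).card = T.card.choose j * Tᶜ.card.choose (k - j) := by
  rw [← Finset.card_powersetCard, ← Finset.card_powersetCard, ← Finset.card_product]
  apply Finset.card_bij' (fun S _ => (S ∩ T, S \ T)) (fun p _ => p.1 ∪ p.2)
  · intro S hS
    simp only [Finset.mem_filter, Finset.mem_powersetCard] at hS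
    obtain ⟨⟨-, hcard⟩, hj'⟩ := hS
    simp only [Finset.mem_product, Finset.mem_powersetCard]
    refine ⟨⟨Finset.inter_subset_right, hj'⟩, fun x hx => ?_, ?_⟩
    · rw [Finset.mem_compl]; exact (Finset.mem_sdiff.mp hx).2
    · have := Finset.card_sdiff_add_card_inter S T
      omega
  · intro p hp
    simp only [Finset.mem_product, Finset.mem_powersetCard] at hp
    obtain ⟨⟨hA, hAc⟩, hB, hBc⟩ := hp
    have hBT : p.2 ∩ T = ∅ := by
      refine Finset.eq_empty_of_forall_notMem fun x hx => ?_
      exact (Finset.mem_compl.mp (hB (Finset.mem_inter.mp hx).1)) (Finset.mem_inter.mp hx).2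
    have hdisj : Disjoint p.1 p.2 := by
      refine Finset.disjoint_left.mpr fun x hx1 hx2 => ?_
      exact (Finset.mem_compl.mp (hB hx2)) (hA hx1)
    simp only [Finset.mem_filter, Finset.mem_powersetCard]
    refine ⟨⟨Finset.subset_univ _, ?_⟩, ?_⟩
    · rw [Finset.card_union_of_disjoint hdisj, hAc, hBc]; omega
    · rw [Finset.union_inter_distrib_right, Finset.inter_eq_left.mpr hA, hBT,
        Finset.union_empty, hAc]
  · intro S hS
    rw [Finset.union_comm]; exact Finset.sdiff_union_inter S T
  · intro p hp
    simp only [Finset.mem_product, Finset.mem_powersetCard] at hp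
    obtain ⟨⟨hA, hAc⟩, hB, hBc⟩ := hp
    have hBT : p.2 ∩ T = ∅ := by
      refine Finset.eq_empty_of_forall_notMem fun x hx => ?_
      exact (Finset.mem_compl.mp (hB (Finset.mem_inter.mp hx).1)) (Finset.mem_inter.mp hx).2
    have h1 : (p.1 ∪ p.2) ∩ T = p.1 := by
      rw [Finset.union_inter_distrib_right, Finset.inter_eq_left.mpr hA, hBT, Finset.union_empty]
    have h2 : (p.1 ∪ p.2) \ T = p.2 := by
      rw [Finset.union_sdiff_distrib, Finset.sdiff_eq_empty_iff_subset.mpr hA,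
        Finset.empty_union, Finset.sdiff_eq_self_iff_disjoint.mpr]
      exact Finset.disjoint_left.mpr fun x hx2 hxT => (Finset.mem_compl.mp (hB hx2)) hxT
    rw [h1, h2]

lemma chi_sum {n k : ℕ} (u : Fin n → ZMod 2) :
    ∑ v ∈ univ.filter (fun v : Fin n → ZMod 2 => (supp v).card = k), chi v u
      = kraw n k (supp u).card := by
  have step1 : ∑ v ∈ univ.filter (fun v : Fin n → ZMod 2 => (supp v).card = k), chi v u
      = ∑ S ∈ Finset.powersetCard k (univ : Finset (Fin n)),
          (-1 : ℝ) ^ (S ∩ supp u).card := by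
    apply Finset.sum_nbij' (fun v => supp v) (fun S => fun i => if i ∈ S then 1 else 0)
    · intro v hv
      simp only [Finset.mem_filter] at hv
      simp only [Finset.mem_powersetCard]
      exact ⟨Finset.subset_univ _, hv.2⟩
    · intro S hS
      simp only [Finset.mem_powersetCard] at hS
      simp only [Finset.mem_filter]
      refine ⟨Finset.mem_univ _, ?_⟩
      have : supp (fun i => if i ∈ S then (1 : ZMod 2) else 0) = S := by
        ext i; simp [supp]
      rw [this, hS.2]
    · intro v hv
      funext i
      by_cases h : v i = 1
      · simp [supp, h]
      · have : v i = 0 := by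
          have h2 : ∀ c : ZMod 2, c = 0 ∨ c = 1 := by decide
          rcases h2 (v i) with h' | h' <;> simp_all
        simp [supp, h, this]
    · intro S hS
      ext i; simp [supp]
    · intro v hv
      exact chi_eq_pow v u
  rw [step1]
  rw [← Finset.sum_fiberwise_of_maps_to (g := fun S => (S ∩ supp u).card)
    (t := Finset.range (k + 1)) (fun S hS => ?_)]
  · unfold kraw
    refine Finset.sum_congr rfl fun j hj => ?_
    have h1 : ∀ S ∈ (Finset.powersetCard k (univ : Finset (Fin n))).filter
        (fun S => (S ∩ supp u).card = j), (-1 : ℝ) ^ (S ∩ supp u).card = (-1 : ℝ) ^ j := by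
      intro S hS
      rw [(Finset.mem_filter.mp hS).2]
    rw [Finset.sum_congr rfl h1, Finset.sum_const,
      key_count (supp u) k j (Nat.lt_succ_iff.mp (Finset.mem_range.mp hj))]
    have hcompl : (supp u)ᶜ.card = n - (supp u).card := by
      rw [Finset.card_compl, Fintype.card_fin]
    rw [hcompl, nsmul_eq_mul]
    push_cast
    ring
  · simp only [Finset.mem_powersetCard] at hS
    rw [Finset.mem_range, Nat.lt_succ_iff, ← hS.2]
    exact Finset.card_le_card Finset.inter_subset_left

lemma hamming_eq_supp {n : ℕ} (c c' : Fin n → ZMod 2) :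
    hammingDist c c' = (supp (c + c')).card := by
  unfold hammingDist supp
  congr 1
  apply Finset.filter_congr
  intro i _
  have h : ∀ a b : ZMod 2, (a ≠ b) ↔ (a + b = 1) := by decide
  simpa using h (c i) (c' i)

lemma kraw_zero (n i : ℕ) : kraw n 0 i = 1 := by
  simp [kraw]

lemma kraw_apply_zero (n k : ℕ) : kraw n k 0 = (n.choose k : ℝ) := by
  unfold kraw
  rw [Finset.sum_eq_single_of_mem 0 (Finset.mem_range.mpr (Nat.succ_pos k))]
  · simp
  · intro j _ hj
    rw [Nat.choose_eq_zero_of_lt (Nat.pos_of_ne_zero hj)]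
    simp

/-- Delsarte's linear programming bound. -/
theorem stmt4 (n d : ℕ) (C : Finset (Fin n → ZMod 2))
    (hdist : ∀ c ∈ C, ∀ c' ∈ C, c ≠ c' → d ≤ hammingDist c c')
    (fc : ℕ → ℝ) (hf0 : 0 < fc 0)
    (hfc : ∀ k, 1 ≤ k → k ≤ n → 0 ≤ fc k)
    (hneg : ∀ i, d ≤ i → i ≤ n → (∑ k ∈ Finset.range (n + 1), fc k * kraw n k i) ≤ 0) :
    (C.card : ℝ) ≤ (∑ k ∈ Finset.range (n + 1), fc k * kraw n k 0) / fc 0 := by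
  classical
  set F0 : ℝ := ∑ k ∈ Finset.range (n + 1), fc k * kraw n k 0 with hF0def
  set M : ℝ := (C.card : ℝ) with hMdef
  -- Positivity of F0
  have hF0nonneg : 0 ≤ F0 := by
    apply Finset.sum_nonneg
    intro k hk
    rw [kraw_apply_zero]
    apply mul_nonneg _ (Nat.cast_nonneg _)
    rcases Nat.eq_zero_or_pos k with h | h
    · rw [h]; exact hf0.le
    · exact hfc k h (Nat.lt_succ_iff.mp (Finset.mem_range.mp hk))
  rcases C.eq_empty_or_nonempty with hC | hC
  · simp only [hMdef, hC, Finset.card_empty, Nat.cast_zero]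
    exact div_nonneg hF0nonneg hf0.le
  -- Fourier coefficients Q k
  set Q : ℕ → ℝ := fun k => ∑ c ∈ C, ∑ c' ∈ C, kraw n k (hammingDist c c') with hQdef
  have hQ : ∀ k, Q k = ∑ v ∈ univ.filter (fun v : Fin n → ZMod 2 => (supp v).card = k),
      (∑ c ∈ C, chi v c) ^ 2 := by
    intro k
    have : ∀ v : Fin n → ZMod 2, (∑ c ∈ C, chi v c) ^ 2
        = ∑ c ∈ C, ∑ c' ∈ C, chi v (c + c') := by
      intro v
      rw [sq, Finset.sum_mul_sum]
      exact Finset.sum_congr rfl fun c _ => Finset.sum_congr rfl fun c' _ =>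
        (chi_mul v c c').symm
    simp_rw [this]
    rw [Finset.sum_comm]
    refine Finset.sum_congr rfl fun c _ => ?_
    rw [Finset.sum_comm]
    refine Finset.sum_congr rfl fun c' _ => ?_
    rw [chi_sum, hamming_eq_supp]
  have hQnonneg : ∀ k, 0 ≤ Q k := fun k => by
    rw [hQ k]; exact Finset.sum_nonneg fun v _ => sq_nonneg _
  have hQ0 : Q 0 = M ^ 2 := by
    simp only [hQdef, kraw_zero]
    simp [sq, hMdef]
  -- The double sum S
  set S : ℝ := ∑ k ∈ Finset.range (n + 1), fc k * Q k with hSdef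
  -- Lower bound
  have hlower : fc 0 * M ^ 2 ≤ S := by
    rw [← hQ0]
    apply Finset.single_le_sum (f := fun k => fc k * Q k) _ (Finset.mem_range.mpr (Nat.succ_pos n))
    intro k hk
    apply mul_nonneg _ (hQnonneg k)
    rcases Nat.eq_zero_or_pos k with h | h
    · rw [h]; exact hf0.le
    · exact hfc k h (Nat.lt_succ_iff.mp (Finset.mem_range.mp hk))
  -- Rewrite S as a sum over pairs of codewords
  have hSalt : S = ∑ c ∈ C, ∑ c' ∈ C,
      ∑ k ∈ Finset.range (n + 1), fc k * kraw n k (hammingDist c c') := by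
    simp only [hSdef, hQdef, Finset.mul_sum]
    rw [Finset.sum_comm]
    exact Finset.sum_congr rfl fun c _ => Finset.sum_comm
  -- Upper bound
  have hupper : S ≤ M * F0 := by
    rw [hSalt]
    have step : ∀ c ∈ C, (∑ c' ∈ C,
        ∑ k ∈ Finset.range (n + 1), fc k * kraw n k (hammingDist c c')) ≤ F0 := by
      intro c hc
      calc ∑ c' ∈ C, ∑ k ∈ Finset.range (n + 1), fc k * kraw n k (hammingDist c c')
          ≤ ∑ c' ∈ C, (if c' = c then F0 else 0) := by
            apply Finset.sum_le_sum
            intro c' hc'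
            by_cases h : c' = c
            · rw [h, if_pos rfl, hammingDist_self]
            · rw [if_neg h]
              apply hneg
              · exact hdist c hc c' hc' (fun he => h (he.symm))
              · have := hammingDist_le_card_fintype (x := c) (y := c')
                simpa using this
        _ = F0 := by rw [Finset.sum_ite_eq' C c (fun _ => F0), if_pos hc]
    calc ∑ c ∈ C, ∑ c' ∈ C, ∑ k ∈ Finset.range (n + 1), fc k * kraw n k (hammingDist c c')
        ≤ ∑ _c ∈ C, F0 := Finset.sum_le_sum step
      _ = M * F0 := by rw [Finset.sum_const, nsmul_eq_mul]
  -- Conclude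
  have hMpos : 0 < M := by
    simp only [hMdef, Nat.cast_pos]
    exact Finset.card_pos.mpr hC
  rw [le_div_iff₀ hf0]
  have key : fc 0 * M ^ 2 ≤ M * F0 := hlower.trans hupper
  have : M * (fc 0 * M) ≤ M * F0 := by
    calc M * (fc 0 * M) = fc 0 * M ^ 2 := by ring
      _ ≤ M * F0 := key
  have := le_of_mul_le_mul_left this hMpos
  linarith
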